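/- arXiv:1501.06157 — 2 statements merged into one kernel-verified Lean document; each statement's English description precedes it below -/
import Mathlib

section
/- Let m0 ≥ 2, m1 > m0, and define q(x) = β(x)/α(x) on (Z_α, ∞), where Z_α is the unique zero of α. Then q is strictly increasing on (Z_α,∞), lim_{x→Z_α^+} q(x) = -∞, and lim_{x→∞} q(x) = m1/(2(m1-1)). -/
/-!
On `(Z_α, ∞)` we have `q = g ∘ tanh` for the fractional linear map `g t = (p t + r) / (c t + d)`
whose pole `z = tanh Z_α` is where `α` vanishes. Since the numerator `p z + r` (a multiple of
`β(Z_α)`) is negative, `g = p / c + (p z + r) / (c (t - z))` increases on `(z, ∞)` and tends to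
`-∞` as `t → z⁺`. Since `tanh` is increasing and continuous, maps `(Z_α, ∞)` into `(z, 1)` and
tends to `1` at `∞`, composing gives all three claims, the last with limit `g 1`.
-/

open Filter Set

noncomputable def artanh (x : ℝ) : ℝ := (1/2) * Real.log ((1 + x) / (1 - x))

open Topology

namespace Real

theorem tanh_strictMono : StrictMono tanh := fun x y hxy => by
  have hx : tanh x ∈ Ioo (-1) 1 := ⟨neg_one_lt_tanh x, tanh_lt_one x⟩
  have hy : tanh y ∈ Ioo (-1) 1 := ⟨neg_one_lt_tanh y, tanh_lt_one y⟩
  rwa [← artanh_lt_artanh_iff hx hy, artanh_tanh, artanh_tanh]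

theorem continuous_tanh : Continuous tanh := by
  simp_rw [funext tanh_eq_sinh_div_cosh]
  exact continuous_sinh.div continuous_cosh fun x => (cosh_pos x).ne'

theorem tendsto_tanh_atTop : Tendsto tanh atTop (𝓝 1) := by
  have htanh (x : ℝ) : tanh x = (1 - exp (-x) ^ 2) / (1 + exp (-x) ^ 2) := by
    rw [tanh_eq, exp_neg]
    field_simp
  have h : Continuous fun u : ℝ => (1 - u ^ 2) / (1 + u ^ 2) :=
    Continuous.div (by fun_prop) (by fun_prop) fun u => by positivity
  simpa only [Function.comp_def, ← htanh, zero_pow two_ne_zero, sub_zero, add_zero,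
    div_one] using (h.tendsto 0).comp tendsto_exp_neg_atTop_nhds_zero

end Real

theorem artanh_eq_real_artanh {x : ℝ} (hx : x ∈ Icc (-1) 1) : artanh x = Real.artanh x :=
  (Real.artanh_eq_half_log hx).symm

theorem tanh_artanh {x : ℝ} (hx : x ∈ Ioo (-1) 1) : Real.tanh (artanh x) = x := by
  rw [artanh_eq_real_artanh (Ioo_subset_Icc_self hx), Real.tanh_artanh hx]

theorem mapsTo_tanh_Ioi_artanh {x : ℝ} (hx : x ∈ Ioo (-1) 1) :
    MapsTo Real.tanh (Ioi (artanh x)) (Ioi x) := fun y hy => by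
  simpa only [mem_Ioi, tanh_artanh hx] using Real.tanh_strictMono hy

theorem tendsto_tanh_nhdsGT_artanh {x : ℝ} (hx : x ∈ Ioo (-1) 1) :
    Tendsto Real.tanh (𝓝[>] (artanh x)) (𝓝[>] x) := by
  have := Real.continuous_tanh.continuousWithinAt.tendsto_nhdsWithin (x := artanh x)
    (mapsTo_tanh_Ioi_artanh hx)
  rwa [tanh_artanh hx] at this

section AffineRatio

variable {p r c d z : ℝ}

theorem mapsTo_affine_Ioi_root (hc : 0 < c) (hz : c * z + d = 0) :
    MapsTo (fun t => c * t + d) (Ioi z) (Ioi 0) := fun t ht => by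
  show 0 < c * t + d
  nlinarith [mul_pos hc (sub_pos.2 (mem_Ioi.1 ht))]

theorem strictMonoOn_affine_div_affine (hc : 0 < c) (hz : c * z + d = 0)
    (hneg : p * z + r < 0) :
    StrictMonoOn (fun t => (p * t + r) / (c * t + d)) (Ioi z) := by
  intro s hs t ht hst
  rw [div_lt_div_iff₀ (mapsTo_affine_Ioi_root hc hz hs) (mapsTo_affine_Ioi_root hc hz ht),
    ← sub_pos]
  have key : (p * t + r) * (c * s + d) - (p * s + r) * (c * t + d) =
      c * -(p * z + r) * (t - s) := by
    linear_combination (t - s) * p * hz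
  rw [key]
  exact mul_pos (mul_pos hc (neg_pos.2 hneg)) (sub_pos.2 hst)

theorem tendsto_affine_div_affine_nhdsGT (hc : 0 < c) (hz : c * z + d = 0)
    (hneg : p * z + r < 0) :
    Tendsto (fun t => (p * t + r) / (c * t + d)) (𝓝[>] z) atBot := by
  have hnum : Tendsto (fun t => p * t + r) (𝓝[>] z) (𝓝 (p * z + r)) :=
    (Continuous.tendsto (by fun_prop) z).mono_left nhdsWithin_le_nhds
  have hden : Tendsto (fun t => c * t + d) (𝓝[>] z) (𝓝[>] 0) := by
    simpa only [hz] using (Continuous.continuousWithinAt (by fun_prop)).tendsto_nhdsWithin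
      (x := z) (mapsTo_affine_Ioi_root hc hz)
  exact (hnum.neg_mul_atTop hneg hden.inv_tendsto_nhdsGT_zero).congr fun t =>
    (div_eq_mul_inv _ _).symm

theorem tendsto_affine_div_affine_comp_tanh_atTop (hc : 0 < c) (hz : c * z + d = 0)
    (hz1 : z < 1) :
    Tendsto ((fun t => (p * t + r) / (c * t + d)) ∘ Real.tanh) atTop (𝓝 ((p + r) / (c + d))) := by
  have hden : c * 1 + d ≠ 0 := (mapsTo_affine_Ioi_root hc hz hz1).ne'
  have hcont : ContinuousAt (fun t => (p * t + r) / (c * t + d)) 1 :=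
    (Continuous.continuousAt (by fun_prop)).div (Continuous.continuousAt (by fun_prop)) hden
  simpa only [mul_one] using hcont.tendsto.comp Real.tendsto_tanh_atTop

theorem affine_div_affine_comp_tanh_properties (hc : 0 < c) (hz : c * z + d = 0)
    (hneg : p * z + r < 0) (hz1 : z ∈ Ioo (-1) 1) :
    StrictMonoOn ((fun t => (p * t + r) / (c * t + d)) ∘ Real.tanh) (Ioi (artanh z)) ∧
      Tendsto ((fun t => (p * t + r) / (c * t + d)) ∘ Real.tanh) (𝓝[>] (artanh z)) atBot ∧
      Tendsto ((fun t => (p * t + r) / (c * t + d)) ∘ Real.tanh) atTop (𝓝 ((p + r) / (c + d))) :=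
  ⟨(strictMonoOn_affine_div_affine hc hz hneg).comp (Real.tanh_strictMono.strictMonoOn _)
      (mapsTo_tanh_Ioi_artanh hz1),
    (tendsto_affine_div_affine_nhdsGT hc hz hneg).comp (tendsto_tanh_nhdsGT_artanh hz1),
    tendsto_affine_div_affine_comp_tanh_atTop hc hz hz1.2⟩

end AffineRatio

/-- For m0 ≥ 2, m1 > m0, the quotient q = β/α is strictly increasing on (Z_α,∞),
tends to -∞ as x → Z_α from the right, and tends to m1/(2(m1-1)) as x → ∞. -/
theorem quotient_q_properties (m0 m1 : ℕ) (hm0 : 2 ≤ m0) (hm1 : m0 < m1)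
    (α β q : ℝ → ℝ)
    (hα : ∀ x, α x = (1/2) * (((m0:ℝ) + m1 - 2) * Real.tanh x + m1 - m0))
    (hβ : ∀ x, β x = (1/4) * (((m0:ℝ) + m1) * Real.tanh x + m1 - m0))
    (hq : ∀ x, q x = β x / α x) :
    StrictMonoOn q (Set.Ioi (artanh (((m0:ℝ) - m1) / ((m0:ℝ) + m1 - 2)))) ∧
      Tendsto q (nhdsWithin (artanh (((m0:ℝ) - m1) / ((m0:ℝ) + m1 - 2)))
        (Set.Ioi (artanh (((m0:ℝ) - m1) / ((m0:ℝ) + m1 - 2))))) atBot ∧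
      Tendsto q atTop (nhds ((m1:ℝ) / (2 * ((m1:ℝ) - 1)))) := by
  have ha : (2:ℝ) ≤ m0 := by exact_mod_cast hm0
  have hab : (m0:ℝ) < m1 := by exact_mod_cast hm1
  have hA : (0:ℝ) < m0 + m1 - 2 := by linarith
  set z : ℝ := ((m0:ℝ) - m1) / ((m0:ℝ) + m1 - 2)
  have hz : z ∈ Ioo (-1) 1 := by
    constructor
    · rw [lt_div_iff₀ hA]; linarith
    · rw [div_lt_iff₀ hA]; linarith
  have hpole : ((m0:ℝ) + m1 - 2) / 2 * z + (m1 - m0) / 2 = 0 := by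
    simp only [z]; field_simp; ring
  have hneg : ((m0:ℝ) + m1) / 4 * z + (m1 - m0) / 4 < 0 := by
    have : z < 0 := div_neg_of_neg_of_pos (by linarith) hA
    -- the left side equals `(c z + d + z) / 2 = z / 2`
    linarith
  have hq' : q = (fun t : ℝ => ((m0 + m1) / 4 * t + (m1 - m0) / 4) /
      ((m0 + m1 - 2) / 2 * t + (m1 - m0) / 2)) ∘ Real.tanh := by
    funext x; simp only [Function.comp_apply, hq, hα, hβ]; ring
  have hlim : (((m0:ℝ) + m1) / 4 + (m1 - m0) / 4) / ((m0 + m1 - 2) / 2 + (m1 - m0) / 2) =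
      m1 / (2 * (m1 - 1)) := by
    rw [← div_div]; congr 1 <;> ring
  rw [hq', ← hlim]
  exact affine_div_affine_comp_tanh_properties (by linarith) hpole hneg hz
end

section
/- Let m0 ≥ 2, m1 ≥ m0, and let r solve the (m0,m1)-ODE with lim_{x→-∞} r(x) = kπ for some integer k and lim_{x→-∞} r'(x) = 0. Then |r'(x)| ≤ √m0 for all x ≤ Z_α, where Z_α is the unique zero of α. -/
open Filter

/-!
The energy `V = r'²/2 - β cos² r` of the ODE `r'' = α r' - β sin 2r` satisfies
`V' = α r'² - β' cos² r`. Left of `Z_α` we have `α ≤ 0`, and `β` is increasing, so `V` is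
nonincreasing there. Since `β > -m0/2` everywhere, `V ≤ r'²/2 + m0/2`, whose limit at `-∞` is
`m0/2`; hence `V ≤ m0/2` on `(-∞, Z_α]`. There also `β ≤ 0`, so `r'²/2 ≤ V ≤ m0/2`.
-/

open Set

theorem tanh_le_of_le_artanh {t x : ℝ} (ht : t ∈ Ioo (-1) 1) (hx : x ≤ artanh t) :
    Real.tanh x ≤ t := by
  rw [artanh, ← Real.artanh_eq_half_log (Ioo_subset_Icc_self ht), ← Real.artanh_tanh x] at hx
  exact (Real.artanh_le_artanh_iff ⟨Real.neg_one_lt_tanh x, Real.tanh_lt_one x⟩ ht).1 hx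

open Real in
theorem hasDerivAt_tanh (x : ℝ) : HasDerivAt tanh (cosh x ^ 2)⁻¹ x := by
  have h := (hasDerivAt_sinh x).div (hasDerivAt_cosh x) (cosh_pos x).ne'
  rw [show sinh / cosh = tanh from funext fun y => (tanh_eq_sinh_div_cosh y).symm,
    ← sq, ← sq, cosh_sq_sub_sinh_sq, one_div] at h
  exact h

section Energy

open Real

variable {a b r r' : ℝ → ℝ}

noncomputable def energy (b r r' : ℝ → ℝ) (x : ℝ) : ℝ := r' x ^ 2 / 2 - b x * cos (r x) ^ 2

theorem hasDerivAt_energy {b' x : ℝ} (hr : HasDerivAt r (r' x) x)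
    (hr' : HasDerivAt r' (a x * r' x - b x * sin (2 * r x)) x) (hb : HasDerivAt b b' x) :
    HasDerivAt (energy b r r') (a x * r' x ^ 2 - b' * cos (r x) ^ 2) x := by
  have hcos := ((hasDerivAt_cos (r x)).comp x hr).pow 2
  refine (((hr'.pow 2).div_const 2).sub (hb.mul hcos)).congr_deriv ?_
  simp only [Pi.pow_apply, Function.comp_apply, sin_two_mul]
  ring

theorem antitoneOn_energy {b' : ℝ → ℝ} {s : Set ℝ} (hs : Convex ℝ s)
    (hr : ∀ x ∈ s, HasDerivAt r (r' x) x)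
    (hr' : ∀ x ∈ s, HasDerivAt r' (a x * r' x - b x * sin (2 * r x)) x)
    (hb : ∀ x ∈ s, HasDerivAt b (b' x) x) (ha : ∀ x ∈ s, a x ≤ 0) (hb' : ∀ x ∈ s, 0 ≤ b' x) :
    AntitoneOn (energy b r r') s := by
  have hE x (hx : x ∈ s) := hasDerivAt_energy (hr x hx) (hr' x hx) (hb x hx)
  refine antitoneOn_of_hasDerivWithinAt_nonpos hs
    (fun x hx => (hE x hx).continuousAt.continuousWithinAt)
    (fun x hx => (hE x (interior_subset hx)).hasDerivWithinAt) fun x hx => ?_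
  have hx := interior_subset hx
  nlinarith [ha x hx, hb' x hx, sq_nonneg (r' x), sq_nonneg (cos (r x))]

theorem energy_le_of_antitoneOn {z c : ℝ} (hE : AntitoneOn (energy b r r') (Iic z))
    (hc : 0 ≤ c) (hb : ∀ y ≤ z, -c ≤ b y) (hr' : Tendsto r' atBot (nhds 0)) {x : ℝ}
    (hx : x ≤ z) : energy b r r' x ≤ c := by
  have hlim : Tendsto (fun y => r' y ^ 2 / 2 + c) atBot (nhds c) := by
    simpa using ((hr'.pow 2).div_const 2).add_const c
  refine ge_of_tendsto hlim ?_
  filter_upwards [eventually_le_atBot x] with y hy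
  calc energy b r r' x ≤ energy b r r' y := hE (hy.trans hx) hx hy
    _ ≤ r' y ^ 2 / 2 + c := by
      unfold energy
      nlinarith [hb y (hy.trans hx), cos_sq_le_one (r y), sq_nonneg (cos (r y))]

end Energy

theorem deriv_bound_left_of_Zalpha_general (m0 m1 : ℕ) (hm0 : 2 ≤ m0) (hm1 : m0 ≤ m1)
    (α β : ℝ → ℝ)
    (hα : ∀ x, α x = (1/2) * (((m0:ℝ) + m1 - 2) * Real.tanh x + m1 - m0))
    (hβ : ∀ x, β x = (1/4) * (((m0:ℝ) + m1) * Real.tanh x + m1 - m0))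
    (r r' : ℝ → ℝ)
    (hr : ∀ x, HasDerivAt r (r' x) x)
    (hr' : ∀ x, HasDerivAt r' (α x * r' x - β x * Real.sin (2 * r x)) x)
    (hlim' : Tendsto r' atBot (nhds 0)) :
    ∀ x : ℝ, x ≤ artanh (((m0:ℝ) - m1) / ((m0:ℝ) + m1 - 2)) →
      |r' x| ≤ Real.sqrt m0 := by
  intro x hx
  set Zα := artanh (((m0:ℝ) - m1) / ((m0:ℝ) + m1 - 2))
  have hm0' : (2:ℝ) ≤ m0 := by exact_mod_cast hm0
  have hm1' : (m0:ℝ) ≤ m1 := by exact_mod_cast hm1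
  have hc : (0:ℝ) < m0 + m1 - 2 := by linarith
  have ht : ((m0:ℝ) - m1) / ((m0:ℝ) + m1 - 2) ∈ Ioo (-1) 1 :=
    ⟨by rw [lt_div_iff₀ hc]; linarith, by rw [div_lt_one hc]; linarith⟩
  have htanh y (hy : y ≤ Zα) : ((m0:ℝ) + m1 - 2) * Real.tanh y ≤ m0 - m1 := by
    rw [← le_div_iff₀' hc]
    exact tanh_le_of_le_artanh ht hy
  have hβ' y : HasDerivAt β ((m0 + m1) / 4 * (Real.cosh y ^ 2)⁻¹) y := by
    rw [funext hβ]
    exact (((((hasDerivAt_tanh y).const_mul _).add_const _).sub_const _).const_mul _).congr_deriv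
      (by ring)
  have hE : AntitoneOn (energy β r r') (Iic Zα) :=
    antitoneOn_energy (convex_Iic Zα) (fun y _ => hr y) (fun y _ => hr' y) (fun y _ => hβ' y)
      (fun y hy => by rw [hα]; linarith [htanh y hy]) (fun y _ => by positivity)
  have hEx : energy β r r' x ≤ m0 / 2 :=
    energy_le_of_antitoneOn hE (by positivity)
      (fun y _ => by rw [hβ]; nlinarith [Real.neg_one_lt_tanh y]) hlim' hx
  have hβx : β x ≤ 0 := by
    rw [hβ]
    nlinarith [htanh x hx]
  refine Real.abs_le_sqrt ?_
  unfold energy at hEx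
  nlinarith [sq_nonneg (Real.cos (r x))]

/-- If r solves the (m0,m1)-ODE with r(x) → kπ and r'(x) → 0 as x → -∞,
then |r'(x)| ≤ √m0 for all x ≤ Z_α. -/
theorem deriv_bound_left_of_Zalpha (m0 m1 : ℕ) (hm0 : 2 ≤ m0) (hm1 : m0 ≤ m1)
    (α β : ℝ → ℝ)
    (hα : ∀ x, α x = (1/2) * (((m0:ℝ) + m1 - 2) * Real.tanh x + m1 - m0))
    (hβ : ∀ x, β x = (1/4) * (((m0:ℝ) + m1) * Real.tanh x + m1 - m0))
    (r r' : ℝ → ℝ)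
    (hr : ∀ x, HasDerivAt r (r' x) x)
    (hr' : ∀ x, HasDerivAt r' (α x * r' x - β x * Real.sin (2 * r x)) x)
    (k : ℤ)
    (hlim : Tendsto r atBot (nhds ((k:ℝ) * Real.pi)))
    (hlim' : Tendsto r' atBot (nhds 0)) :
    ∀ x : ℝ, x ≤ artanh (((m0:ℝ) - m1) / ((m0:ℝ) + m1 - 2)) →
      |r' x| ≤ Real.sqrt m0 :=
  deriv_bound_left_of_Zalpha_general m0 m1 hm0 hm1 α β hα hβ r r' hr hr' hlim'
end
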